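/- arXiv:2112.14131 — 3 statements merged into one kernel-verified Lean document; each statement's English description precedes it below -/
import Mathlib

section
/- Let n, l be positive natural numbers, A an n×n real matrix, B an n×1 real matrix, K a 1×n real matrix, D an n×l real matrix, P a symmetric n×n real matrix, and τ, χ real numbers. For an n×n diagonal real matrix Ψ define the (n+l)×(n+l) block matrix M(Ψ) = [[(A+BKΨ)ᵀP + P(A+BKΨ) + τP, PD], [DᵀP, −χI_l]]. Let ρ₀ ≤ ρ₁ be real numbers. If M(Ψ) is negative definite for every diagonal matrix Ψ each of whose diagonal entries lies in the two-point set {ρ₀, ρ₁}, then M(Ψ) is negative definite for every diagonal matrix Ψ each of whose diagonal entries lies in the interval [ρ₀, ρ₁]. -/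
open Matrix

/-- A real matrix is negative definite (as a quadratic form) if `zᵀ M z < 0`
for every nonzero vector `z`. -/
def NegDefQF {m : Type*} [Fintype m] (M : Matrix m m ℝ) : Prop :=
  ∀ z : m → ℝ, z ≠ 0 → z ⬝ᵥ M *ᵥ z < 0

/-- if the block LMI matrix is negative definite at every diagonal
matrix whose entries are vertices `{ρ₀, ρ₁}`, then it is negative definite at
every diagonal matrix with entries in the interval `[ρ₀, ρ₁]`. -/
theorem stmt_0 (n l : ℕ) (hn : 0 < n) (hl : 0 < l)
    (A : Matrix (Fin n) (Fin n) ℝ) (B : Matrix (Fin n) (Fin 1) ℝ)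
    (K : Matrix (Fin 1) (Fin n) ℝ) (D : Matrix (Fin n) (Fin l) ℝ)
    (P : Matrix (Fin n) (Fin n) ℝ) (hP : P.IsSymm) (τ χ : ℝ)
    (ρ₀ ρ₁ : ℝ) (hρ : ρ₀ ≤ ρ₁)
    (hvertex : ∀ d : Fin n → ℝ, (∀ i, d i = ρ₀ ∨ d i = ρ₁) →
      NegDefQF (Matrix.fromBlocks
        ((A + B * K * Matrix.diagonal d)ᵀ * P + P * (A + B * K * Matrix.diagonal d) + τ • P)
        (P * D) (Dᵀ * P) ((-χ) • (1 : Matrix (Fin l) (Fin l) ℝ)))) :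
    ∀ d : Fin n → ℝ, (∀ i, d i ∈ Set.Icc ρ₀ ρ₁) →
      NegDefQF (Matrix.fromBlocks
        ((A + B * K * Matrix.diagonal d)ᵀ * P + P * (A + B * K * Matrix.diagonal d) + τ • P)
        (P * D) (Dᵀ * P) ((-χ) • (1 : Matrix (Fin l) (Fin l) ℝ))) := by
  set M : (Fin n → ℝ) → Matrix (Fin n ⊕ Fin l) (Fin n ⊕ Fin l) ℝ := fun d =>
    Matrix.fromBlocks
      ((A + B * K * Matrix.diagonal d)ᵀ * P + P * (A + B * K * Matrix.diagonal d) + τ • P)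
      (P * D) (Dᵀ * P) ((-χ) • (1 : Matrix (Fin l) (Fin l) ℝ)) with hMdef
  -- `M` is affine in `d`
  have haff : ∀ a : ℝ, ∀ x y : Fin n → ℝ,
      M (a • x + (1 - a) • y) = a • M x + (1 - a) • M y := by
    intro a x y
    have hdiag : Matrix.diagonal (a • x + (1 - a) • y) =
        a • Matrix.diagonal x + (1 - a) • Matrix.diagonal y := by
      ext i j
      by_cases h : i = j <;> simp [Matrix.diagonal_apply, h]
    have hTL : (A + B * K * Matrix.diagonal (a • x + (1 - a) • y))ᵀ * P +
        P * (A + B * K * Matrix.diagonal (a • x + (1 - a) • y)) + τ • P =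
        a • ((A + B * K * Matrix.diagonal x)ᵀ * P + P * (A + B * K * Matrix.diagonal x) + τ • P) +
        (1 - a) • ((A + B * K * Matrix.diagonal y)ᵀ * P + P * (A + B * K * Matrix.diagonal y)
          + τ • P) := by
      rw [hdiag]
      simp only [mul_add, add_mul, Matrix.mul_smul, Matrix.smul_mul, Matrix.transpose_add,
        Matrix.transpose_smul, smul_add, smul_smul]
      module
    have hcomb : ∀ {p q : Type} (X : Matrix p q ℝ), a • X + (1 - a) • X = X := by
      intro p q X
      rw [← add_smul]
      simp
    simp only [hMdef]
    rw [Matrix.fromBlocks_smul, Matrix.fromBlocks_smul, Matrix.fromBlocks_add, hTL,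
      hcomb, hcomb, hcomb]
  -- affinity of the quadratic form
  have hqaff : ∀ (z : Fin n ⊕ Fin l → ℝ) (a : ℝ) (x y : Fin n → ℝ),
      z ⬝ᵥ M (a • x + (1 - a) • y) *ᵥ z =
        a * (z ⬝ᵥ M x *ᵥ z) + (1 - a) * (z ⬝ᵥ M y *ᵥ z) := by
    intro z a x y
    rw [haff a x y, Matrix.add_mulVec, Matrix.smul_mulVec, Matrix.smul_mulVec,
      dotProduct_add, dotProduct_smul, dotProduct_smul, smul_eq_mul, smul_eq_mul]
  -- main induction: relax coordinates in `s` to the interval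
  have key : ∀ s : Finset (Fin n), ∀ d : Fin n → ℝ,
      (∀ i ∈ s, d i ∈ Set.Icc ρ₀ ρ₁) → (∀ i ∉ s, d i = ρ₀ ∨ d i = ρ₁) →
      NegDefQF (M d) := by
    intro s
    induction s using Finset.induction_on with
    | empty =>
      intro d _ hv
      exact hvertex d fun i => hv i (Finset.notMem_empty i)
    | @insert i s hi IH =>
      intro d hIcc hv
      have hdi : d i ∈ Set.Icc ρ₀ ρ₁ := hIcc i (Finset.mem_insert_self i s)
      -- the interpolation parameter
      obtain ⟨t, ht0, ht1, htd⟩ : ∃ t : ℝ, 0 ≤ t ∧ t ≤ 1 ∧ t * ρ₀ + (1 - t) * ρ₁ = d i := by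
        rcases eq_or_lt_of_le hρ with h | h
        · exact ⟨1, zero_le_one, le_refl 1, by
            have := hdi.1; have := hdi.2; rw [← h] at *; ring_nf; linarith⟩
        · refine ⟨(ρ₁ - d i) / (ρ₁ - ρ₀), by
            apply div_nonneg <;> linarith [hdi.2], by
            rw [div_le_one (by linarith)]; linarith [hdi.1], ?_⟩
          have h2 : (ρ₁ - d i) / (ρ₁ - ρ₀) * (ρ₁ - ρ₀) = ρ₁ - d i :=
            div_mul_cancel₀ _ (by linarith : ρ₁ - ρ₀ ≠ 0)
          linear_combination -h2
      have hd : d = t • Function.update d i ρ₀ + (1 - t) • Function.update d i ρ₁ := by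
        funext j
        by_cases hj : j = i
        · subst hj; simp [Function.update_self, htd]
        · simp [Function.update_of_ne hj]; ring
      intro z hz
      have h0 : NegDefQF (M (Function.update d i ρ₀)) := by
        apply IH
        · intro j hj
          have hji : j ≠ i := fun h => hi (h ▸ hj)
          rw [Function.update_of_ne hji]
          exact hIcc j (Finset.mem_insert_of_mem hj)
        · intro j hj
          by_cases hji : j = i
          · subst hji; simp [Function.update_self]
          · rw [Function.update_of_ne hji]
            exact hv j (by simp [hji, hj])
      have h1 : NegDefQF (M (Function.update d i ρ₁)) := by
        apply IH
        · intro j hj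
          have hji : j ≠ i := fun h => hi (h ▸ hj)
          rw [Function.update_of_ne hji]
          exact hIcc j (Finset.mem_insert_of_mem hj)
        · intro j hj
          by_cases hji : j = i
          · subst hji; simp [Function.update_self]
          · rw [Function.update_of_ne hji]
            exact hv j (by simp [hji, hj])
      have e0 := h0 z hz
      have e1 := h1 z hz
      calc z ⬝ᵥ M d *ᵥ z
          = t * (z ⬝ᵥ M (Function.update d i ρ₀) *ᵥ z) +
            (1 - t) * (z ⬝ᵥ M (Function.update d i ρ₁) *ᵥ z) := by
            conv_lhs => rw [hd]
            exact hqaff z t _ _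
        _ < 0 := by
            rcases eq_or_lt_of_le ht0 with h | h
            · rw [← h]; simpa using e1
            · have h2 : (1 - t) * (z ⬝ᵥ M (Function.update d i ρ₁) *ᵥ z) ≤ 0 :=
                mul_nonpos_of_nonneg_of_nonpos (by linarith) e1.le
              have h3 : t * (z ⬝ᵥ M (Function.update d i ρ₀) *ᵥ z) < 0 :=
                mul_neg_of_pos_of_neg h e0
              linarith
  intro d hd
  exact key Finset.univ d (fun i _ => hd i) (fun i hi => absurd (Finset.mem_univ i) hi)
end

section
/- Let n, l be positive natural numbers, A an n×n real matrix, B an n×1 real matrix, K a 1×n real matrix, D an n×l real matrix, P a symmetric positive definite n×n real matrix, τ > 0, χ > 0, and ρ₀ ≤ ρ₁ real numbers. Suppose that for every diagonal matrix Ψ with each diagonal entry in {ρ₀, ρ₁} the block matrix [[(A+BKΨ)ᵀP + P(A+BKΨ) + τP, PD], [DᵀP, −χI_l]] is negative definite. Let x : ℝ → ℝⁿ be differentiable, f : ℝ → ℝˡ, and Ψ : ℝ → (n×n diagonal matrices) be such that every diagonal entry of Ψ(t) lies in [ρ₀, ρ₁] and x′(t) = (A + BKΨ(t))x(t) + D f(t)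 for all t ≥ 0. Then the function V(t) = x(t)ᵀ P x(t) satisfies V′(t) ≤ −τ V(t) + χ |f(t)|² for all t ≥ 0. -/
open Matrix

/-!
Fix `t`. Along `x' = M x + D f` with `M = A + BKΨ(t)`, the quadratic form of the block matrix
`[[MᵀP + PM + τP, PD], [DᵀP, -χI]]` at `(x(t), f(t))` is exactly `V'(t) + τV(t) - χ|f(t)|²`.
As a function of the diagonal entries of `Ψ` this quadratic form is affine, so on the box
`[ρ₀, ρ₁]ⁿ` it is dominated by its value at a suitable vertex, where the LMI makes it nonpositive.
-/

section Derivatives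

variable {𝕜 ι : Type*} [NontriviallyNormedField 𝕜] [Fintype ι] {x y : 𝕜 → ι → 𝕜} {x' y' : ι → 𝕜}
  {t : 𝕜}

theorem HasDerivAt.dotProduct (hx : HasDerivAt x x' t) (hy : HasDerivAt y y' t) :
    HasDerivAt (fun s => x s ⬝ᵥ y s) (x' ⬝ᵥ y t + x t ⬝ᵥ y') t := by
  simp only [_root_.dotProduct, ← Finset.sum_add_distrib]
  exact HasDerivAt.fun_sum fun i _ =>
    (hasDerivAt_pi.mp hx i).mul (hasDerivAt_pi.mp hy i)

theorem HasDerivAt.mulVec {κ : Type*} (M : Matrix κ ι 𝕜) (hx : HasDerivAt x x' t) :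
    HasDerivAt (fun s => M *ᵥ x s) (M *ᵥ x') t :=
  hasDerivAt_pi.mpr fun i => (hasDerivAt_const t (M i)).dotProduct hx |>.congr_deriv (by simp; rfl)

end Derivatives

section LyapunovBlock

variable {ι κ : Type*} [Fintype ι] [Fintype κ] [DecidableEq κ]

def lyapunovBlock (M P : Matrix ι ι ℝ) (D : Matrix ι κ ℝ) (τ χ : ℝ) :
    Matrix (ι ⊕ κ) (ι ⊕ κ) ℝ :=
  fromBlocks (Mᵀ * P + P * M + τ • P) (P * D) (Dᵀ * P) ((-χ) • 1)

theorem sumElim_dotProduct_lyapunovBlock_mulVec (M P : Matrix ι ι ℝ) (D : Matrix ι κ ℝ)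
    (τ χ : ℝ) (u : ι → ℝ) (g : κ → ℝ) :
    Sum.elim u g ⬝ᵥ lyapunovBlock M P D τ χ *ᵥ Sum.elim u g
      = (M *ᵥ u + D *ᵥ g) ⬝ᵥ P *ᵥ u + u ⬝ᵥ P *ᵥ (M *ᵥ u + D *ᵥ g)
        + τ * (u ⬝ᵥ P *ᵥ u) - χ * (g ⬝ᵥ g) := by
  simp only [lyapunovBlock, fromBlocks_mulVec, sumElim_dotProduct_sumElim, add_mulVec,
    mulVec_add, dotProduct_add, add_dotProduct, dotProduct_mulVec, ← vecMul_vecMul,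
    vecMul_transpose, add_vecMul, smul_mulVec, dotProduct_smul, smul_eq_mul, one_mulVec,
    Sum.elim_comp_inl, Sum.elim_comp_inr]
  ring

theorem exists_sumElim_dotProduct_lyapunovBlock_mulVec_eq_affine [DecidableEq ι]
    (A N P : Matrix ι ι ℝ) (D : Matrix ι κ ℝ) (τ χ : ℝ) (u : ι → ℝ) (g : κ → ℝ) :
    ∃ (q : ℝ) (c : ι → ℝ), ∀ e : ι → ℝ,
      Sum.elim u g ⬝ᵥ lyapunovBlock (A + N * diagonal e) P D τ χ *ᵥ Sum.elim u g
        = q + ∑ i, c i * e i := by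
  refine ⟨Sum.elim u g ⬝ᵥ lyapunovBlock A P D τ χ *ᵥ Sum.elim u g,
    fun i => u i * ((P *ᵥ u) ᵥ* N + (u ᵥ* P) ᵥ* N) i, fun e => ?_⟩
  have hdiag : (N * diagonal e) *ᵥ u = N *ᵥ fun i => e i * u i := by
    rw [← mulVec_mulVec]
    exact congrArg _ (funext (mulVec_diagonal e u))
  rw [sumElim_dotProduct_lyapunovBlock_mulVec, sumElim_dotProduct_lyapunovBlock_mulVec,
    add_mulVec, hdiag]
  simp only [add_dotProduct, dotProduct_add, mulVec_add, dotProduct_mulVec, add_vecMul]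
  set w : ι → ℝ := fun i => e i * u i
  have hleft : (N *ᵥ w) ᵥ* P ⬝ᵥ u = w ⬝ᵥ (P *ᵥ u) ᵥ* N := by
    rw [← dotProduct_mulVec, dotProduct_comm, dotProduct_mulVec, dotProduct_comm]
  have hsum : w ⬝ᵥ ((P *ᵥ u) ᵥ* N + u ᵥ* P ᵥ* N)
      = ∑ i, u i * ((P *ᵥ u) ᵥ* N + u ᵥ* P ᵥ* N) i * e i :=
    Finset.sum_congr rfl fun i _ => by ring
  rw [hleft, dotProduct_comm (u ᵥ* P ᵥ* N), ← hsum, dotProduct_add]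
  ring

end LyapunovBlock

theorem NegDefQF.dotProduct_mulVec_nonpos {m : Type*} [Fintype m] {M : Matrix m m ℝ}
    (hM : NegDefQF M) (z : m → ℝ) : z ⬝ᵥ M *ᵥ z ≤ 0 := by
  rcases eq_or_ne z 0 with rfl | hz
  · simp
  · exact (hM z hz).le

theorem exists_vertex_le_of_affine {ι : Type*} [Fintype ι] {ρ₀ ρ₁ : ℝ} {F : (ι → ℝ) → ℝ}
    {q : ℝ} {c : ι → ℝ} (hF : ∀ e, F e = q + ∑ i, c i * e i) {w : ι → ℝ}
    (hw : ∀ i, w i ∈ Set.Icc ρ₀ ρ₁) :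
    ∃ d : ι → ℝ, (∀ i, d i = ρ₀ ∨ d i = ρ₁) ∧ F w ≤ F d := by
  classical
  refine ⟨fun i => if 0 ≤ c i then ρ₁ else ρ₀, fun i => by dsimp only; split_ifs <;> simp, ?_⟩
  rw [hF, hF]
  refine add_le_add_right (Finset.sum_le_sum fun i _ => ?_) q
  obtain ⟨hw₀, hw₁⟩ := hw i
  split_ifs with hc
  · exact mul_le_mul_of_nonneg_left hw₁ hc
  · exact mul_le_mul_of_nonpos_left hw₀ (not_le.mp hc).le

theorem stmt_3_general (n l : ℕ)
    (A : Matrix (Fin n) (Fin n) ℝ) (B : Matrix (Fin n) (Fin 1) ℝ)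
    (K : Matrix (Fin 1) (Fin n) ℝ) (D : Matrix (Fin n) (Fin l) ℝ)
    (P : Matrix (Fin n) (Fin n) ℝ)
    (τ χ : ℝ) (ρ₀ ρ₁ : ℝ)
    (hvertex : ∀ d : Fin n → ℝ, (∀ i, d i = ρ₀ ∨ d i = ρ₁) →
      NegDefQF (Matrix.fromBlocks
        ((A + B * K * Matrix.diagonal d)ᵀ * P + P * (A + B * K * Matrix.diagonal d) + τ • P)
        (P * D) (Dᵀ * P) ((-χ) • (1 : Matrix (Fin l) (Fin l) ℝ))))
    (x : ℝ → Fin n → ℝ) (f : ℝ → Fin l → ℝ) (ψ : ℝ → Fin n → ℝ)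
    (hψ : ∀ t ≥ (0 : ℝ), ∀ i, ψ t i ∈ Set.Icc ρ₀ ρ₁)
    (hx : ∀ t ≥ (0 : ℝ), HasDerivAt x
      ((A + B * K * Matrix.diagonal (ψ t)) *ᵥ x t + D *ᵥ f t) t) :
    ∀ t ≥ (0 : ℝ),
      deriv (fun s => x s ⬝ᵥ P *ᵥ x s) t
        ≤ -τ * (x t ⬝ᵥ P *ᵥ x t) + χ * (∑ i, (f t i) ^ 2) := by
  intro t ht
  obtain ⟨q, c, haffine⟩ := exists_sumElim_dotProduct_lyapunovBlock_mulVec_eq_affine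
    A (B * K) P D τ χ (x t) (f t)
  obtain ⟨d, hd, hle⟩ := exists_vertex_le_of_affine haffine (hψ t ht)
  have hψ_nonpos :=
    hle.trans ((hvertex d hd).dotProduct_mulVec_nonpos (Sum.elim (x t) (f t)))
  have hsq : f t ⬝ᵥ f t = ∑ i, f t i ^ 2 := by simp only [dotProduct, sq]
  rw [((hx t ht).dotProduct ((hx t ht).mulVec P)).deriv]
  rw [sumElim_dotProduct_lyapunovBlock_mulVec, hsq] at hψ_nonpos
  linarith

/-- along solutions of `x' = (A + BKΨ(t))x + Df`, with the LMI
satisfied at the vertices of the box `[ρ₀, ρ₁]ⁿ`, the Lyapunov function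
`V = xᵀPx` satisfies `V' ≤ −τV + χ|f|²`. -/
theorem stmt_3 (n l : ℕ) (hn : 0 < n) (hl : 0 < l)
    (A : Matrix (Fin n) (Fin n) ℝ) (B : Matrix (Fin n) (Fin 1) ℝ)
    (K : Matrix (Fin 1) (Fin n) ℝ) (D : Matrix (Fin n) (Fin l) ℝ)
    (P : Matrix (Fin n) (Fin n) ℝ) (hPsymm : P.IsSymm)
    (hPpos : ∀ z : Fin n → ℝ, z ≠ 0 → 0 < z ⬝ᵥ P *ᵥ z)
    (τ χ : ℝ) (hτ : 0 < τ) (hχ : 0 < χ) (ρ₀ ρ₁ : ℝ) (hρ : ρ₀ ≤ ρ₁)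
    (hvertex : ∀ d : Fin n → ℝ, (∀ i, d i = ρ₀ ∨ d i = ρ₁) →
      NegDefQF (Matrix.fromBlocks
        ((A + B * K * Matrix.diagonal d)ᵀ * P + P * (A + B * K * Matrix.diagonal d) + τ • P)
        (P * D) (Dᵀ * P) ((-χ) • (1 : Matrix (Fin l) (Fin l) ℝ))))
    (x : ℝ → Fin n → ℝ) (f : ℝ → Fin l → ℝ) (ψ : ℝ → Fin n → ℝ)
    (hψ : ∀ t ≥ (0 : ℝ), ∀ i, ψ t i ∈ Set.Icc ρ₀ ρ₁)
    (hx : ∀ t ≥ (0 : ℝ), HasDerivAt x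
      ((A + B * K * Matrix.diagonal (ψ t)) *ᵥ x t + D *ᵥ f t) t) :
    ∀ t ≥ (0 : ℝ),
      deriv (fun s => x s ⬝ᵥ P *ᵥ x s) t
        ≤ -τ * (x t ⬝ᵥ P *ᵥ x t) + χ * (∑ i, (f t i) ^ 2) :=
  stmt_3_general n l A B K D P τ χ ρ₀ ρ₁ hvertex x f ψ hψ hx
end

section
/- Let n be a positive natural number and τ > 0, γ > 0, p > 0, c ≥ 0, ε > 0 real numbers with τγε² > c. Let x : ℝ → ℝⁿ satisfy γ|x(t)|² ≤ V(t) and V(t) ≤ c/τ + (p|x(0)|² + c/τ)·e^{−τt} for all t ≥ 0, for some function V : ℝ → ℝ. Set T = (1/τ)·ln((τ p |x(0)|² + c)/(τγε² − c)). Then for every t ≥ max(T, 0), |x(t)| ≤ ε. -/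
/-
Along the trajectory, `γ|x(t)|² ≤ V(t)` lies under the envelope
`c/τ + A e^{-τt}` with `A = p|x(0)|² + c/τ`. The envelope decreases to `c/τ < γε²`, and `T` is
exactly the time at which `A e^{-τT} = γε² - c/τ`; after that `γ|x(t)|² ≤ γε²`.
-/

/-- Euclidean norm of a vector in `ℝⁿ`. -/
noncomputable def eucNorm {n : ℕ} (v : Fin n → ℝ) : ℝ :=
  Real.sqrt (∑ i, v i ^ 2)

open Real

lemma mul_exp_neg_le_of_log_div_le {τ a b t : ℝ} (hτ : 0 < τ) (ha : 0 < a) (hb : 0 < b)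
    (ht : (1 / τ) * log (a / b) ≤ t) : a * exp (-τ * t) ≤ b := by
  have hlog : log (a / b) ≤ τ * t := by
    rwa [one_div, inv_mul_le_iff₀ hτ] at ht
  calc a * exp (-τ * t) ≤ a * exp (-log (a / b)) := by gcongr; linarith
    _ = b := by rw [exp_neg, exp_log (div_pos ha hb), inv_div, mul_div_cancel₀ _ ha.ne']

lemma div_add_mul_exp_neg_le {τ c A M t : ℝ} (hτ : 0 < τ) (hM : c < τ * M)
    (ht : (1 / τ) * log (τ * A / (τ * M - c)) ≤ t) : c / τ + A * exp (-τ * t) ≤ M := by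
  have hcM : c / τ < M := by rwa [div_lt_iff₀' hτ]
  rcases le_or_gt A 0 with hA | hA
  · nlinarith [exp_pos (-τ * t)]
  · have hdecay := mul_exp_neg_le_of_log_div_le hτ (mul_pos hτ hA) (sub_pos.2 hM) ht
    rw [div_add' _ _ _ hτ.ne', div_le_iff₀ hτ]
    linear_combination hdecay

theorem stmt_6_general (n : ℕ) (τ γ p c ε : ℝ) (hτ : 0 < τ) (hγ : 0 < γ)
    (hε : 0 < ε) (hbig : τ * γ * ε ^ 2 > c)
    (x : ℝ → Fin n → ℝ) (V : ℝ → ℝ)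
    (hlow : ∀ t ≥ (0 : ℝ), γ * (eucNorm (x t)) ^ 2 ≤ V t)
    (hup : ∀ t ≥ (0 : ℝ),
      V t ≤ c / τ + (p * (eucNorm (x 0)) ^ 2 + c / τ) * Real.exp (-τ * t)) :
    ∀ t ≥ max ((1 / τ) * Real.log ((τ * p * (eucNorm (x 0)) ^ 2 + c) / (τ * γ * ε ^ 2 - c))) 0,
      eucNorm (x t) ≤ ε := by
  intro t ht
  obtain ⟨hT, ht0⟩ := max_le_iff.1 ht
  have hτA : τ * p * eucNorm (x 0) ^ 2 + c = τ * (p * eucNorm (x 0) ^ 2 + c / τ) := by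
    rw [mul_add, mul_div_cancel₀ _ hτ.ne', mul_assoc]
  have hT' : (1 / τ) * log (τ * (p * eucNorm (x 0) ^ 2 + c / τ) / (τ * (γ * ε ^ 2) - c)) ≤ t := by
    rwa [← hτA, ← mul_assoc]
  have henv := div_add_mul_exp_neg_le hτ (by rwa [← mul_assoc]) hT'
  have hsq : eucNorm (x t) ^ 2 ≤ ε ^ 2 :=
    le_of_mul_le_mul_left ((hlow t ht0).trans ((hup t ht0).trans henv)) hγ
  exact (pow_le_pow_iff_left₀ (sqrt_nonneg _) hε.le two_ne_zero).1 hsq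

/-- the transient-time estimate: after time
`T = (1/τ)·ln((τp|x(0)|² + c)/(τγε² − c))` the trajectory stays in the ball of
radius `ε`. -/
theorem stmt_6 (n : ℕ) (hn : 0 < n) (τ γ p c ε : ℝ) (hτ : 0 < τ) (hγ : 0 < γ)
    (hp : 0 < p) (hc : 0 ≤ c) (hε : 0 < ε) (hbig : τ * γ * ε ^ 2 > c)
    (x : ℝ → Fin n → ℝ) (V : ℝ → ℝ)
    (hlow : ∀ t ≥ (0 : ℝ), γ * (eucNorm (x t)) ^ 2 ≤ V t)
    (hup : ∀ t ≥ (0 : ℝ),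
      V t ≤ c / τ + (p * (eucNorm (x 0)) ^ 2 + c / τ) * Real.exp (-τ * t)) :
    ∀ t ≥ max ((1 / τ) * Real.log ((τ * p * (eucNorm (x 0)) ^ 2 + c) / (τ * γ * ε ^ 2 - c))) 0,
      eucNorm (x t) ≤ ε :=
  stmt_6_general n τ γ p c ε hτ hγ hε hbig x V hlow hup
end
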